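/- arXiv:2206.10308 — 2 statements merged into one kernel-verified Lean document; each statement's English description precedes it below -/
import Mathlib

section
/- Let (P_n)_{n≥0} be a monic OPS with recurrence coefficients (B_n), (C_n), and suppose there exist complex sequences (a_n)_{n≥0}, (b_n)_{n≥0}, (c_n)_{n≥0} with c_0 = 0 such that S_q P_n = (a_n·X + b_n)·P_n + c_n·P_{n−1} for all n ≥ 0 (this is the case a = 0, c = −1 of the structure relation (a·X − c)·S_q P_n = (a_n·X + b_n)·P_n + c_n·P_{n−1}). Then a_n = 0 and b_n = α_n for all n ≥ 0, and c_n = (α_n − α_{n−1})·(B_0 + B_1 + ⋯ + B_{n−1}) for all n ≥ 1. -/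
noncomputable section

/-- Real power `q ^ r` (with `q > 0` in applications), coerced into `ℂ`. -/
def rp (q : ℝ) (r : ℝ) : ℂ := ((q ^ r : ℝ) : ℂ)

/-- The lattice point `x(z) = (z + z⁻¹)/2`. -/
def xl (z : ℂ) : ℂ := (z + z⁻¹) / 2

/-- `x₊(z) = (q^{1/2} z + q^{-1/2} z⁻¹)/2`. -/
def xp (q : ℝ) (z : ℂ) : ℂ := (rp q (1/2) * z + rp q (-(1/2)) * z⁻¹) / 2

/-- `x₋(z) = (q^{-1/2} z + q^{1/2} z⁻¹)/2`. -/
def xm (q : ℝ) (z : ℂ) : ℂ := (rp q (-(1/2)) * z + rp q (1/2) * z⁻¹) / 2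

/-- `IsSq q f g` means `g = S_q f`, i.e. `g` satisfies the defining property of the
averaging operator applied to `f`. -/
def IsSq (q : ℝ) (f g : Polynomial ℂ) : Prop :=
  ∀ z : ℂ, z ≠ 0 → Polynomial.eval (xl z) g =
    (Polynomial.eval (xp q z) f + Polynomial.eval (xm q z) f) / 2

/-- `IsDq q f g` means `g = D_q f`, i.e. `g` satisfies the defining property of the
Askey-Wilson operator applied to `f`. -/
def IsDq (q : ℝ) (f g : Polynomial ℂ) : Prop :=
  ∀ z : ℂ, z ≠ 0 → Polynomial.eval (xl z) g * (xp q z - xm q z) =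
    Polynomial.eval (xp q z) f - Polynomial.eval (xm q z) f

/-- `α = (q^{1/2} + q^{-1/2})/2`. -/
def alphaC (q : ℝ) : ℂ := (rp q (1/2) + rp q (-(1/2))) / 2

/-- `α_n = (q^{n/2} + q^{-n/2})/2`. -/
def alphaN (q : ℝ) (n : ℕ) : ℂ := (rp q ((n : ℝ)/2) + rp q (-((n : ℝ)/2))) / 2

/-- `γ_n = (q^{n/2} - q^{-n/2})/(q^{1/2} - q^{-1/2})`. -/
def gammaN (q : ℝ) (n : ℕ) : ℂ :=
  (rp q ((n : ℝ)/2) - rp q (-((n : ℝ)/2))) / (rp q (1/2) - rp q (-(1/2)))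

/-- The monic Chebyshev polynomials of the first kind. -/
def chebM (n : ℕ) : Polynomial ℂ :=
  if n = 0 then 1 else (2 : ℂ) ^ (1 - (n : ℤ)) • Polynomial.Chebyshev.T ℂ (n : ℤ)

end

/-!
The averaging operator acts diagonally on the Chebyshev polynomials: from
`T n (x z) = x (z ^ n)` and the product formula `x a * x b = (x (a b) + x (a⁻¹ b)) / 2` one gets
`S_q (T n) = α_n T n`. Since `T n` has leading coefficient `2 ^ (n - 1)` and no `X ^ (n - 1)` term,
peeling off leading Chebyshev terms shows that for `deg f ≤ n` the coefficients of `S_q f` at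
`X ^ n` and `X ^ (n - 1)` are `α_n` and `α_{n-1}` times those of `f`. Comparing the coefficients of
`X ^ (n + 1)`, `X ^ n` and `X ^ (n - 1)` in the structure relation then gives `a_n = 0`,
`b_n = α_n` and `c_n = (α_{n-1} - α_n) p_n`, where `p_n` is the coefficient of `X ^ (n - 1)` in
`P_n`; the three-term recurrence gives `p_n = -(B_0 + ⋯ + B_{n-1})`.
-/

open Polynomial
open Polynomial.Chebyshev (T)

namespace Polynomial.Chebyshev

theorem eval_T_add_inv_div_two {K : Type*} [Field K] [NeZero (2 : K)] {z : K} (hz : z ≠ 0)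
    (n : ℕ) : (T K n).eval ((z + z⁻¹) / 2) = (z ^ n + z⁻¹ ^ n) / 2 := by
  induction n using Nat.twoStepInduction with
  | zero => simp
  | one => simp
  | more n ih₀ ih₁ =>
    push_cast at ih₁ ⊢
    rw [T_add_two, eval_sub, eval_mul, eval_mul, eval_X, ih₀, ih₁, eval_ofNat,
      mul_div_cancel₀ _ two_ne_zero]
    linear_combination (z ^ n + z⁻¹ ^ n) / 2 * mul_inv_cancel₀ hz

theorem coeff_T_add_one_self {R : Type*} [CommRing R] [IsDomain R] [NeZero (2 : R)] (n : ℕ) :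
    (T R (n + 1)).coeff n = 0 := by
  induction n using Nat.twoStepInduction with
  | zero => simp
  | one => simp [T_two, coeff_one]
  | more n _ ih =>
    have hlt : (T R (n + 1)).natDegree < n + 2 := by simp only [natDegree_T]; omega
    push_cast at ih ⊢
    rw [show (n : ℤ) + 2 + 1 = n + 1 + 2 by ring, T_add_two, coeff_sub, mul_assoc,
      coeff_ofNat_mul, coeff_X_mul, ih, coeff_eq_zero_of_natDegree_lt hlt]
    simp

theorem coeff_T_natCast_self {R : Type*} [CommRing R] [IsDomain R] [NeZero (2 : R)] (n : ℕ) :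
    (T R n).coeff n = 2 ^ (n - 1) := by
  simpa [leadingCoeff] using leadingCoeff_T R n

end Polynomial.Chebyshev

section AveragingOperator

variable {q : ℝ}

lemma xl_mul_xl (a b : ℂ) : xl a * xl b = (xl (a * b) + xl (a⁻¹ * b)) / 2 := by
  simp only [xl, mul_inv, inv_inv]
  ring

lemma rp_neg (hq : 0 < q) (r : ℝ) : rp q (-r) = (rp q r)⁻¹ := by
  simp [rp, Real.rpow_neg hq.le]

lemma rp_mul_natCast (hq : 0 < q) (r : ℝ) (n : ℕ) : rp q (r * n) = rp q r ^ n := by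
  simp [rp, Real.rpow_mul_natCast hq.le]

lemma rp_ne_zero (hq : 0 < q) (r : ℝ) : rp q r ≠ 0 := by
  simpa [rp] using (Real.rpow_pos_of_pos hq r).ne'

lemma xp_eq_xl (hq : 0 < q) (z : ℂ) : xp q z = xl (rp q (1 / 2) * z) := by
  rw [xp, xl, rp_neg hq, mul_inv]

lemma xm_eq_xl (hq : 0 < q) (z : ℂ) : xm q z = xl ((rp q (1 / 2))⁻¹ * z) := by
  rw [xm, xl, rp_neg hq, mul_inv, inv_inv]

lemma alphaN_eq_xl (hq : 0 < q) (n : ℕ) : alphaN q n = xl (rp q (1 / 2) ^ n) := by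
  rw [alphaN, xl, ← rp_mul_natCast hq, rp_neg hq, one_div_mul_eq_div]

lemma alphaN_zero (q : ℝ) : alphaN q 0 = 1 := by
  simp [alphaN, rp]

lemma eval_T_xl {z : ℂ} (hz : z ≠ 0) (n : ℕ) : (T ℂ n).eval (xl z) = xl (z ^ n) := by
  rw [xl, xl, Chebyshev.eval_T_add_inv_div_two hz, inv_pow]

lemma isSq_T (hq : 0 < q) (n : ℕ) : IsSq q (T ℂ n) (C (alphaN q n) * T ℂ n) := by
  intro z hz
  have hs := rp_ne_zero hq (1 / 2)
  rw [eval_mul, eval_C, eval_T_xl hz, xp_eq_xl hq, xm_eq_xl hq, eval_T_xl (mul_ne_zero hs hz),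
    eval_T_xl (mul_ne_zero (inv_ne_zero hs) hz), alphaN_eq_xl hq, xl_mul_xl, mul_pow, mul_pow,
    inv_pow]

lemma isSq_C (c : ℂ) : IsSq q (C c) (C c) := fun z _ => by simp

lemma IsSq.add {f₁ f₂ g₁ g₂ : ℂ[X]} (h₁ : IsSq q f₁ g₁) (h₂ : IsSq q f₂ g₂) :
    IsSq q (f₁ + f₂) (g₁ + g₂) := fun z hz => by
  simp only [eval_add, h₁ z hz, h₂ z hz]
  ring

lemma IsSq.C_mul {f g : ℂ[X]} (h : IsSq q f g) (c : ℂ) : IsSq q (C c * f) (C c * g) :=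
  fun z hz => by
  simp only [eval_mul, eval_C, h z hz]
  ring

lemma exists_xl_eq (x : ℂ) : ∃ z ≠ 0, xl z = x := by
  obtain ⟨θ, rfl⟩ := Complex.cos_surjective x
  refine ⟨Complex.exp (θ * Complex.I), Complex.exp_ne_zero _, ?_⟩
  rw [xl, ← Complex.exp_neg, Complex.cos, neg_mul]

lemma IsSq.unique {f g₁ g₂ : ℂ[X]} (h₁ : IsSq q f g₁) (h₂ : IsSq q f g₂) : g₁ = g₂ :=
  Polynomial.funext fun x => by
    obtain ⟨z, hz, rfl⟩ := exists_xl_eq x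
    rw [h₁ z hz, h₂ z hz]

lemma exists_isSq_of_natDegree_le (hq : 0 < q) (n : ℕ) {f : ℂ[X]} (hf : f.natDegree ≤ n) :
    ∃ g, IsSq q f g ∧ g.natDegree ≤ n ∧ g.coeff n = alphaN q n * f.coeff n ∧
      g.coeff (n - 1) = alphaN q (n - 1) * f.coeff (n - 1) := by
  induction n generalizing f with
  | zero =>
    rw [eq_C_of_natDegree_le_zero hf]
    exact ⟨_, isSq_C _, (natDegree_C _).le, by simp [alphaN_zero], by simp [alphaN_zero]⟩
  | succ n ih =>
    have hT : (T ℂ (n + 1)).coeff (n + 1) = 2 ^ n := by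
      simpa using Chebyshev.coeff_T_natCast_self (R := ℂ) (n + 1)
    set s := f.coeff (n + 1) / 2 ^ n
    set r := f - C s * T ℂ (n + 1) with hr
    have hTdeg : (T ℂ (n + 1)).natDegree ≤ n + 1 := by simp only [Chebyshev.natDegree_T]; omega
    have hrn : r.natDegree ≤ n := by
      refine natDegree_le_pred (n := n + 1) ?_ ?_
      · exact (natDegree_sub_le _ _).trans (max_le hf ((natDegree_C_mul_le _ _).trans hTdeg))
      · simp [hr, hT, s]
    have hrcoeff : r.coeff n = f.coeff n := by
      simp [hr, Chebyshev.coeff_T_add_one_self]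
    obtain ⟨g, hg, hgdeg, hgn, -⟩ := ih hrn
    refine ⟨C s * (C (alphaN q (n + 1)) * T ℂ (n + 1)) + g, ?_, ?_, ?_, ?_⟩
    · simpa [hr] using ((isSq_T hq (n + 1)).C_mul s).add hg
    · refine natDegree_add_le_of_degree_le ?_ (hgdeg.trans n.le_succ)
      exact (natDegree_C_mul_le _ _).trans ((natDegree_C_mul_le _ _).trans hTdeg)
    · simp only [coeff_add, coeff_C_mul, hT, s,
        coeff_eq_zero_of_natDegree_lt (hgdeg.trans_lt n.lt_succ_self), add_zero]
      field_simp
    · simp [Chebyshev.coeff_T_add_one_self, hgn, hrcoeff]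

lemma IsSq.coeff_eq_alphaN_mul (hq : 0 < q) {f g : ℂ[X]} (h : IsSq q f g) {n : ℕ}
    (hf : f.natDegree ≤ n + 1) : g.coeff n = alphaN q n * f.coeff n := by
  obtain ⟨g', hg', -, -, hcoeff⟩ := exists_isSq_of_natDegree_le hq (n + 1) hf
  simpa [h.unique hg'] using hcoeff

end AveragingOperator

section OrthogonalPolynomials

variable {R : Type*} [CommRing R] {P : ℕ → R[X]} {b c : ℕ → R}

lemma coeff_succ_self_eq_neg_sum (hmonic : ∀ n, (P n).Monic) (hdeg : ∀ n, (P n).natDegree = n)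
    (hrec0 : X * P 0 = P 1 + C (b 0) * P 0)
    (hrec : ∀ n, X * P (n + 1) = P (n + 2) + C (b (n + 1)) * P (n + 1) + C (c (n + 1)) * P n)
    (n : ℕ) : (P (n + 1)).coeff n = -∑ j ∈ Finset.range (n + 1), b j := by
  induction n with
  | zero =>
    have hP0 : P 0 = 1 := (hmonic 0).natDegree_eq_zero.mp (hdeg 0)
    have hP1 : P 1 = X - C (b 0) := by linear_combination -hrec0 + (X - C (b 0)) * hP0
    simp [hP1]
  | succ n ih =>
    have hP : P (n + 2) = X * P (n + 1) - C (b (n + 1)) * P (n + 1) - C (c (n + 1)) * P n := by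
      linear_combination -hrec n
    have hlead : (P (n + 1)).coeff (n + 1) = 1 := by
      simpa only [hdeg] using (hmonic (n + 1)).coeff_natDegree
    have hzero : (P n).coeff (n + 1) = 0 := coeff_eq_zero_of_natDegree_lt (by rw [hdeg]; omega)
    rw [hP, coeff_sub, coeff_sub, coeff_X_mul, coeff_C_mul, coeff_C_mul, ih, hlead, hzero,
      Finset.sum_range_succ _ (n + 1)]
    ring

end OrthogonalPolynomials

theorem stmt5_general (q : ℝ) (hq0 : 0 < q)
    (P : ℕ → Polynomial ℂ) (B C : ℕ → ℂ)
    (hmonic : ∀ n, (P n).Monic) (hdeg : ∀ n, (P n).natDegree = n)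
    (hrec0 : Polynomial.X * P 0 = P 1 + Polynomial.C (B 0) * P 0)
    (hrec : ∀ n : ℕ, Polynomial.X * P (n + 1) =
      P (n + 2) + Polynomial.C (B (n + 1)) * P (n + 1) + Polynomial.C (C (n + 1)) * P n)
    (sa sb sc : ℕ → ℂ) (hc0 : sc 0 = 0)
    (hstruct : ∀ n : ℕ, IsSq q (P n)
      ((Polynomial.C (sa n) * Polynomial.X + Polynomial.C (sb n)) * P n
        + Polynomial.C (sc n) * P (n - 1))) :
    (∀ n : ℕ, sa n = 0 ∧ sb n = alphaN q n) ∧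
    (∀ n : ℕ, 1 ≤ n →
      sc n = (alphaN q n - alphaN q (n - 1)) * ∑ j ∈ Finset.range n, B j) := by
  have hlead (n : ℕ) : (P n).coeff n = 1 := by simpa only [hdeg] using (hmonic n).coeff_natDegree
  have hzero {n k : ℕ} (h : n < k) : (P n).coeff k = 0 :=
    coeff_eq_zero_of_natDegree_lt (by rwa [hdeg])
  have hcoeff (n k : ℕ) (hk : n ≤ k + 1) :=
    (hstruct n).coeff_eq_alphaN_mul hq0 (n := k) (by rw [hdeg]; omega)
  have ha (n : ℕ) : sa n = 0 := by
    simpa [add_mul, mul_assoc, coeff_X_mul, hlead, hzero] using hcoeff n (n + 1) (by omega)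
  have hb (n : ℕ) : sb n = alphaN q n := by
    have h := hcoeff n n (by omega)
    rcases n with _ | m
    · simpa [ha, hc0, hlead] using h
    · simpa [ha, hlead, hzero] using h
  have hc (m : ℕ) : sc (m + 1) = (alphaN q m - alphaN q (m + 1)) * (P (m + 1)).coeff m := by
    have h := hcoeff (m + 1) m (by omega)
    simp only [ha, hb, hlead, map_zero, zero_mul, zero_add, add_tsub_cancel_right, coeff_add,
      coeff_C_mul, mul_one] at h
    linear_combination h
  refine ⟨fun n => ⟨ha n, hb n⟩, fun n hn => ?_⟩
  obtain ⟨m, rfl⟩ := Nat.exists_eq_add_of_le' hn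
  rw [hc, coeff_succ_self_eq_neg_sum hmonic hdeg hrec0 hrec, Nat.add_sub_cancel]
  ring

theorem stmt5 (q : ℝ) (hq0 : 0 < q) (hq1 : q < 1)
    (P : ℕ → Polynomial ℂ) (B C : ℕ → ℂ)
    (hmonic : ∀ n, (P n).Monic) (hdeg : ∀ n, (P n).natDegree = n)
    (hCne : ∀ n, 1 ≤ n → C n ≠ 0)
    (hrec0 : Polynomial.X * P 0 = P 1 + Polynomial.C (B 0) * P 0)
    (hrec : ∀ n : ℕ, Polynomial.X * P (n + 1) =
      P (n + 2) + Polynomial.C (B (n + 1)) * P (n + 1) + Polynomial.C (C (n + 1)) * P n)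
    (sa sb sc : ℕ → ℂ) (hc0 : sc 0 = 0)
    (hstruct : ∀ n : ℕ, IsSq q (P n)
      ((Polynomial.C (sa n) * Polynomial.X + Polynomial.C (sb n)) * P n
        + Polynomial.C (sc n) * P (n - 1))) :
    (∀ n : ℕ, sa n = 0 ∧ sb n = alphaN q n) ∧
    (∀ n : ℕ, 1 ≤ n →
      sc n = (alphaN q n - alphaN q (n - 1)) * ∑ j ∈ Finset.range n, B j) :=
  stmt5_general q hq0 P B C hmonic hdeg hrec0 hrec sa sb sc hc0 hstruct
end

section
/- Let (P_n)_{n≥0} be a monic OPS with recurrence coefficients (B_n), (C_n), and suppose there exists a complex sequence (c_n)_{n≥0} with c_0 = 0 such that S_q P_n = α_n·P_n + c_n·P_{n−1} for all n ≥ 0. Then c_1 = (α − 1)·B_0 and (α + 1)(2C_1 − 1) = (B_1 − (2α + 1)B_0)·B_0. -/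
/-!
Evaluating the averaging operator on monomials gives `S_q X = α X` and
`S_q X² = (2α² - 1) X² + 1 - α²`. The recurrence makes `P₁ = X - B₀` and
`P₂ = (X - B₁)(X - B₀) - C₁` explicit, so the structure relations for `n = 1, 2` become
polynomial identities of degree at most one in `x`. Comparing them at `x = 1` and `x = 0`
yields `c₁` and eliminates `c₂`; the remaining identity carries a factor `α - 1`, which is
nonzero since `q ≠ 1`.
-/

open Polynomial

section AveragingOperator

variable {q : ℝ}

theorem rp_add (hq0 : 0 < q) (a b : ℝ) : rp q (a + b) = rp q a * rp q b := by
  rw [rp, rp, rp, Real.rpow_add hq0, Complex.ofReal_mul]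

theorem rp_half_mul_rp_neg_half (hq0 : 0 < q) : rp q (1/2) * rp q (-(1/2)) = 1 := by
  rw [← rp_add hq0, add_neg_cancel, rp, Real.rpow_zero, Complex.ofReal_one]

theorem alphaN_one (q : ℝ) : alphaN q 1 = alphaC q := by
  norm_num [alphaN, alphaC]

theorem alphaN_two (hq0 : 0 < q) : alphaN q 2 = 2 * alphaC q ^ 2 - 1 := by
  have hsq : ∀ r : ℝ, rp q (2 * r) = rp q r ^ 2 := fun r => by rw [two_mul, rp_add hq0, sq]
  have h := rp_half_mul_rp_neg_half hq0
  rw [alphaN, alphaC, show ((2 : ℕ) : ℝ) / 2 = 2 * (1/2) by norm_num,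
    show -(2 * (1/2 : ℝ)) = 2 * (-(1/2)) by ring, hsq, hsq]
  linear_combination -h

theorem alphaC_ne_one (hq0 : 0 < q) (hq1 : q ≠ 1) : alphaC q ≠ 1 := by
  have hr1 : q ^ (1/2 : ℝ) ≠ 1 := by rwa [← Real.sqrt_eq_rpow, Ne, Real.sqrt_eq_one]
  have hr : 0 < q ^ (1/2 : ℝ) := Real.rpow_pos_of_pos hq0 _
  have halpha : alphaC q = ((q ^ (1/2 : ℝ) + (q ^ (1/2 : ℝ))⁻¹) / 2 : ℝ) := by
    rw [alphaC, rp, rp, Real.rpow_neg hq0.le]; push_cast; rfl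
  generalize q ^ (1/2 : ℝ) = r at hr hr1 halpha
  rw [halpha, Ne, ← Complex.ofReal_one, Complex.ofReal_inj]
  intro h
  field_simp at h
  exact hr1 (by nlinarith [sq_nonneg (r - 1)])

theorem xl_one : xl 1 = 1 := by norm_num [xl]

theorem xl_I : xl Complex.I = 0 := by simp [xl]

theorem xp_add_xm (q : ℝ) (z : ℂ) : (xp q z + xm q z) / 2 = alphaC q * xl z := by
  rw [xp, xm, alphaC, xl]; ring

theorem xp_sq_add_xm_sq (hq0 : 0 < q) {z : ℂ} (hz : z ≠ 0) :
    (xp q z ^ 2 + xm q z ^ 2) / 2 = (2 * alphaC q ^ 2 - 1) * xl z ^ 2 + 1 - alphaC q ^ 2 := by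
  have h := rp_half_mul_rp_neg_half hq0
  rw [xp, xm, alphaC, xl]
  field_simp
  linear_combination (-2 * (z ^ 2 - 1) ^ 2) * h

theorem average_eval_X_sub_C (q : ℝ) (z b : ℂ) :
    (eval (xp q z) (X - C b) + eval (xm q z) (X - C b)) / 2 = alphaC q * xl z - b := by
  simp only [eval_sub, eval_X, eval_C]
  linear_combination xp_add_xm q z

theorem average_eval_quadratic (hq0 : 0 < q) {z : ℂ} (hz : z ≠ 0) (a b d : ℂ) :
    (eval (xp q z) ((X - C a) * (X - C b) - C d) +
        eval (xm q z) ((X - C a) * (X - C b) - C d)) / 2 =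
      (2 * alphaC q ^ 2 - 1) * xl z ^ 2 + 1 - alphaC q ^ 2 - (a + b) * alphaC q * xl z
        + a * b - d := by
  simp only [eval_sub, eval_mul, eval_X, eval_C]
  linear_combination xp_sq_add_xm_sq hq0 hz - (a + b) * xp_add_xm q z

end AveragingOperator

section StructureRelation

variable {q : ℝ}

theorem IsSq.structure_relation_one {b c : ℂ}
    (h : IsSq q (X - C b) (C (alphaN q 1) * (X - C b) + C c)) :
    c = (alphaC q - 1) * b := by
  have h1 := h 1 one_ne_zero
  rw [average_eval_X_sub_C, xl_one, alphaN_one] at h1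
  simp only [eval_add, eval_mul, eval_sub, eval_X, eval_C] at h1
  linear_combination h1

theorem IsSq.structure_relation_two (hq0 : 0 < q) (hq1 : q ≠ 1) {a b c d : ℂ}
    (h : IsSq q ((X - C a) * (X - C b) - C d)
      (C (alphaN q 2) * ((X - C a) * (X - C b) - C d) + C c * (X - C b))) :
    (alphaC q + 1) * (2 * d - 1) = (a - (2 * alphaC q + 1) * b) * b := by
  -- `z = 1` and `z = I` lie over `x = 1` and `x = 0`.
  have at_one := h 1 one_ne_zero
  have at_I := h Complex.I Complex.I_ne_zero
  rw [average_eval_quadratic hq0 one_ne_zero, xl_one, alphaN_two hq0] at at_one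
  rw [average_eval_quadratic hq0 Complex.I_ne_zero, xl_I, alphaN_two hq0] at at_I
  simp only [eval_add, eval_mul, eval_sub, eval_X, eval_C] at at_one at_I
  have hc : c = (2 * alphaC q + 1) * (alphaC q - 1) * (a + b) := by
    linear_combination at_one - at_I
  have key : (alphaC q - 1) * ((alphaC q + 1) * (2 * d - 1) - (a - (2 * alphaC q + 1) * b) * b)
      = 0 := by
    linear_combination -at_I - b * hc
  have hα : alphaC q - 1 ≠ 0 := sub_ne_zero.mpr (alphaC_ne_one hq0 hq1)
  exact sub_eq_zero.mp ((mul_eq_zero.mp key).resolve_left hα)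

end StructureRelation

theorem stmt17_general (q : ℝ) (hq0 : 0 < q) (hq1 : q < 1)
    (P : ℕ → Polynomial ℂ) (B C : ℕ → ℂ)
    (hmonic : ∀ n, (P n).Monic) (hdeg : ∀ n, (P n).natDegree = n)
    (hrec0 : Polynomial.X * P 0 = P 1 + Polynomial.C (B 0) * P 0)
    (hrec : ∀ n : ℕ, Polynomial.X * P (n + 1) =
      P (n + 2) + Polynomial.C (B (n + 1)) * P (n + 1) + Polynomial.C (C (n + 1)) * P n)
    (sc : ℕ → ℂ)
    (hstruct : ∀ n : ℕ, IsSq q (P n)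
      (Polynomial.C (alphaN q n) * P n + Polynomial.C (sc n) * P (n - 1))) :
    sc 1 = (alphaC q - 1) * B 0 ∧
    (alphaC q + 1) * (2 * C 1 - 1) = (B 1 - (2 * alphaC q + 1) * B 0) * B 0 := by
  have hP0 : P 0 = 1 := (hmonic 0).natDegree_eq_zero.mp (hdeg 0)
  have hP1 : P 1 = X - Polynomial.C (B 0) := by
    linear_combination -hrec0 + (X - Polynomial.C (B 0)) * hP0
  have hP2 : P 2 = (X - Polynomial.C (B 1)) * (X - Polynomial.C (B 0)) - Polynomial.C (C 1) := by
    linear_combination -hrec 0 + (X - Polynomial.C (B 1)) * hP1 - Polynomial.C (C 1) * hP0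
  have h1 := hstruct 1
  have h2 := hstruct 2
  rw [Nat.sub_self, hP0, mul_one, hP1] at h1
  rw [show 2 - 1 = 1 from rfl, hP1, hP2] at h2
  exact ⟨h1.structure_relation_one, h2.structure_relation_two hq0 hq1.ne⟩

theorem stmt17 (q : ℝ) (hq0 : 0 < q) (hq1 : q < 1)
    (P : ℕ → Polynomial ℂ) (B C : ℕ → ℂ)
    (hmonic : ∀ n, (P n).Monic) (hdeg : ∀ n, (P n).natDegree = n)
    (hCne : ∀ n, 1 ≤ n → C n ≠ 0)
    (hrec0 : Polynomial.X * P 0 = P 1 + Polynomial.C (B 0) * P 0)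
    (hrec : ∀ n : ℕ, Polynomial.X * P (n + 1) =
      P (n + 2) + Polynomial.C (B (n + 1)) * P (n + 1) + Polynomial.C (C (n + 1)) * P n)
    (sc : ℕ → ℂ) (hc0 : sc 0 = 0)
    (hstruct : ∀ n : ℕ, IsSq q (P n)
      (Polynomial.C (alphaN q n) * P n + Polynomial.C (sc n) * P (n - 1))) :
    sc 1 = (alphaC q - 1) * B 0 ∧
    (alphaC q + 1) * (2 * C 1 - 1) = (B 1 - (2 * alphaC q + 1) * B 0) * B 0 :=
  stmt17_general q hq0 hq1 P B C hmonic hdeg hrec0 hrec sc hstruct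
end
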